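/- Let n₃ be the 3-dimensional real Heisenberg Lie algebra with basis e₁,e₂,e₃ and brackets [e₁,e₂]=e₃, [e₁,e₃]=[e₂,e₃]=0, let m = span(e₁,e₂), and let D₁, D₂ ∈ δ⁺(n₃) be derivations with D₁(m) ⊆ m and D₂(m) ⊆ m. Denote by (Dᵢ)_m the restriction of Dᵢ to m. Then the expanded Lie algebras n₃(D₁) and n₃(D₂) are isomorphic as Lie algebras if and only if there exist an invertible linear map g of m and a real number λ ≠ 0 such that (D₁)_m = λ · g⁻¹ ∘ (D₂)_m ∘ g. -/

import Mathlib

open Module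

/-- `D` is a derivation of the real Lie algebra `L`. -/
def IsLieDeriv {L : Type*} [LieRing L] [LieAlgebra ℝ L] (D : Module.End ℝ L) : Prop :=
  ∀ x y : L, D ⁅x, y⁆ = ⁅D x, y⁆ + ⁅x, D y⁆

/-- All eigenvalues (complex roots of the characteristic polynomial) of `f` have
positive real part. -/
def PosSpec {V : Type*} [AddCommGroup V] [Module ℝ V] [Module.Finite ℝ V]
    (f : Module.End ℝ V) : Prop :=
  ∀ z ∈ ((LinearMap.charpoly f).map (algebraMap ℝ ℂ)).roots, 0 < z.re

/-- The bracket of the expanded Lie algebra `n(D) = n ⊕ ℝ`, where `A_D = (0,1)`. -/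
def expBracket {L : Type*} [LieRing L] [LieAlgebra ℝ L] (D : Module.End ℝ L)
    (p q : L × ℝ) : L × ℝ :=
  (⁅p.1, q.1⁆ + p.2 • D q.1 - q.2 • D p.1, 0)

/-- The expanded Lie algebras `n(D₁)` and `n(D₂)` are isomorphic as Lie algebras. -/
def ExpIso {L : Type*} [LieRing L] [LieAlgebra ℝ L] (D₁ D₂ : Module.End ℝ L) : Prop :=
  ∃ e : (L × ℝ) ≃ₗ[ℝ] (L × ℝ), ∀ p q, e (expBracket D₁ p q) = expBracket D₂ (e p) (e q)

/-!
An isomorphism `Φ : n(D₁) → n(D₂)` maps derived algebra onto derived algebra. As `D₁` is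
invertible, the derived algebra of `n(D₁)` is `n₃ × 0`, so `Φ` restricts to an injective Lie
endomorphism `φ` of `n₃` with `φ ∘ D₁ = ad w ∘ φ + μ • D₂ ∘ φ` and `μ ≠ 0`. Projecting onto `m`
along the centre `ℝ e₃`, which contains every bracket and is preserved by `φ` and `D₂`, kills the
`ad w` term and yields `g ∈ GL(m)` with `g ∘ D₁ = μ • D₂ ∘ g` on `m`.

Conversely every `g ∈ GL(m)` extends to a Lie automorphism `φ` of `n₃` (scaling `e₃` by
`det g`). The relation `φ ∘ D₁ = λ • D₂ ∘ φ` propagates from `m` to `e₃ = ⁅e₁, e₂⁆` because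
`D₁, D₂` are derivations, and then `φ × (λ •)` is an isomorphism `n(D₁) → n(D₂)`.
-/

section ExpandedAlgebra

variable {L : Type*} [LieRing L] [LieAlgebra ℝ L]

theorem surjective_of_posSpec {V : Type*} [AddCommGroup V] [Module ℝ V] [Module.Finite ℝ V]
    {f : Module.End ℝ V} (hf : PosSpec f) : Function.Surjective f := by
  rw [← LinearMap.injective_iff_surjective, injective_iff_map_eq_zero]
  by_contra! ⟨v, hv, hv0⟩
  have hcoeff : Polynomial.constantCoeff f.charpoly = 0 :=
    (LinearMap.charpoly_constantCoeff_eq_zero_iff f).mpr ⟨v, hv0, hv⟩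
  have hroot : (0 : ℂ) ∈ (f.charpoly.map (algebraMap ℝ ℂ)).roots := by
    rw [Polynomial.mem_roots ((f.charpoly_monic.map _).ne_zero), Polynomial.IsRoot,
      Polynomial.eval_map, Polynomial.eval₂_at_zero, ← Polynomial.constantCoeff_apply, hcoeff,
      map_zero]
  simpa using hf 0 hroot

theorem expIso_of_lieEquiv {D₁ D₂ : Module.End ℝ L} (φ : L ≃ₗ⁅ℝ⁆ L) {lam : ℝ} (hlam : lam ≠ 0)
    (hφ : ∀ x, φ (D₁ x) = lam • D₂ (φ x)) : ExpIso D₁ D₂ := by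
  refine ⟨φ.toLinearEquiv.prodCongr (LinearEquiv.smulOfNeZero ℝ ℝ lam hlam), fun p q => ?_⟩
  ext
  · simp [expBracket, hφ, smul_smul, mul_comm, φ.map_lie]
  · simp [expBracket]

theorem exists_lieHom_of_expIso {D₁ D₂ : Module.End ℝ L} (hD₁ : Function.Surjective D₁)
    (h : ExpIso D₁ D₂) : ∃ (φ : L →ₗ⁅ℝ⁆ L) (w : L) (μ : ℝ), Function.Injective φ ∧ μ ≠ 0 ∧
      ∀ x, φ (D₁ x) = ⁅w, φ x⁆ + μ • D₂ (φ x) := by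
  obtain ⟨Φ, hΦ⟩ := h
  -- `D₁` being onto, every `(x, 0)` is a bracket in `n(D₁)`, so `Φ` maps `n × 0` into `n × 0`
  have hsnd : ∀ x, (Φ (x, 0)).2 = 0 := by
    intro x
    obtain ⟨y, rfl⟩ := hD₁ x
    have : ((D₁ y, 0) : L × ℝ) = expBracket D₁ (y, 0) (0, -1) := by simp [expBracket]
    rw [this, hΦ]
    rfl
  let φ : L →ₗ[ℝ] L := LinearMap.fst ℝ L ℝ ∘ₗ Φ.toLinearMap ∘ₗ LinearMap.inl ℝ L ℝ
  have hΦφ : ∀ x, Φ (x, 0) = (φ x, 0) := fun x => Prod.ext rfl (hsnd x)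
  have hlie : ∀ x y, φ ⁅x, y⁆ = ⁅φ x, φ y⁆ := fun x y => by
    simpa [expBracket, hΦφ] using congrArg Prod.fst (hΦ (x, 0) (y, 0))
  refine ⟨{ φ with map_lie' := hlie _ _ }, (Φ (0, 1)).1, (Φ (0, 1)).2, ?_, ?_, fun x => ?_⟩
  · intro x y (hxy : φ x = φ y)
    simpa using Φ.injective (by simp [hΦφ, hxy] : Φ (x, 0) = Φ (y, 0))
  · intro hμ
    have : ∀ p, (Φ p).2 = 0 := fun p => by
      have hp : p = (p.1, 0) + p.2 • ((0 : L), (1 : ℝ)) := by ext <;> simp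
      rw [hp, map_add, map_smul]
      simp [hsnd, hμ]
    simpa using this (Φ.symm (0, 1))
  · show φ (D₁ x) = ⁅_, φ x⁆ + _ • D₂ (φ x)
    simpa [expBracket, hΦφ] using congrArg Prod.fst (hΦ (0, 1) (x, 0))

end ExpandedAlgebra

theorem map_isLieDeriv_lie {L L' : Type*} [LieRing L] [LieAlgebra ℝ L] [LieRing L']
    [LieAlgebra ℝ L'] (φ : L →ₗ⁅ℝ⁆ L') {D₁ : Module.End ℝ L} {D₂ : Module.End ℝ L'}
    (hD₁ : IsLieDeriv D₁) (hD₂ : IsLieDeriv D₂) {lam : ℝ} {x y : L}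
    (hx : φ (D₁ x) = lam • D₂ (φ x)) (hy : φ (D₁ y) = lam • D₂ (φ y)) :
    φ (D₁ ⁅x, y⁆) = lam • D₂ (φ ⁅x, y⁆) := by
  rw [hD₁, map_add, φ.map_lie, φ.map_lie, hx, hy, φ.map_lie, hD₂, smul_lie, lie_smul, smul_add]

section Complement

variable {K V : Type*} [Field K] [AddCommGroup V] [Module K V] {m z : Submodule K V}

theorem Submodule.projectionOnto_apply_of_mapsTo (h : IsCompl m z) {T : V →ₗ[K] V}
    (hT : ∀ x ∈ z, T x ∈ z) (x : V) :
    m.projectionOnto z h (T x) = m.projectionOnto z h (T (m.projection z h x)) := by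
  conv_lhs => rw [← Submodule.projection_add_projection_eq_self h x]
  rw [map_add, map_add, Submodule.projectionOnto_apply_of_mem_right h
    (hT _ (Submodule.projection_apply_mem _ _)), add_zero]

theorem LinearMap.map_mem_iff_of_injective [FiniteDimensional K z] {φ : V →ₗ[K] V}
    (hφ : Function.Injective φ) (hz : ∀ x ∈ z, φ x ∈ z) (x : V) : φ x ∈ z ↔ x ∈ z := by
  refine ⟨fun hx => ?_, hz x⟩
  have hsurj : Function.Surjective (φ.restrict hz) :=
    LinearMap.injective_iff_surjective.mp fun u v huv =>
      Subtype.ext (hφ (congrArg Subtype.val huv))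
  obtain ⟨y, hy⟩ := hsurj ⟨φ x, hx⟩
  rw [← hφ (congrArg Subtype.val hy)]
  exact y.2

end Complement

theorem exists_linearEquiv_conj_restrict {K L : Type*} [Field K] [LieRing L] [LieAlgebra K L]
    {m z : Submodule K L} [FiniteDimensional K m] (hmz : IsCompl m z)
    (hlie : ∀ x y : L, ⁅x, y⁆ ∈ z) {D₁ D₂ : Module.End K L} (hm₁ : ∀ x ∈ m, D₁ x ∈ m)
    (hm₂ : ∀ x ∈ m, D₂ x ∈ m) (hz₂ : ∀ x ∈ z, D₂ x ∈ z) {φ : L →ₗ[K] L}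
    (hφz : ∀ x, φ x ∈ z ↔ x ∈ z) {w : L} {μ : K}
    (hφ : ∀ x, φ (D₁ x) = ⁅w, φ x⁆ + μ • D₂ (φ x)) :
    ∃ g : m ≃ₗ[K] m, ∀ v, g (D₁.restrict hm₁ v) = μ • D₂.restrict hm₂ (g v) := by
  let π := m.projectionOnto z hmz
  let g : m →ₗ[K] m := π ∘ₗ φ ∘ₗ m.subtype
  have hg : Function.Injective g := by
    refine (injective_iff_map_eq_zero g).mpr fun v hv => Subtype.ext ?_
    have hvz : (v : L) ∈ z := (hφz v).mp ((Submodule.projectionOnto_apply_eq_zero_iff hmz).mp hv)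
    exact Submodule.disjoint_def.mp hmz.disjoint v v.2 hvz
  refine ⟨LinearEquiv.ofInjectiveEndo g hg, fun v => ?_⟩
  calc π (φ (D₁ v))
      = μ • π (D₂ (φ v)) := by
        rw [hφ, map_add, Submodule.projectionOnto_apply_of_mem_right hmz (hlie _ _), zero_add,
          map_smul]
    _ = μ • π (D₂ (m.projection z hmz (φ v))) := by
        rw [Submodule.projectionOnto_apply_of_mapsTo hmz hz₂]
    _ = μ • D₂.restrict hm₂ (g v) := by
        rw [Submodule.projectionOnto_apply_of_mem_left hmz
          (hm₂ _ (Submodule.projection_apply_mem _ _))]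
        rfl

theorem Module.Basis.isCompl_span_pair_span_singleton {V : Type*} [AddCommGroup V] [Module ℝ V]
    (e : Basis (Fin 3) ℝ V) : IsCompl (Submodule.span ℝ {e 0, e 1}) (ℝ ∙ e 2) := by
  have hcompl : IsCompl ({0, 1} : Set (Fin 3)) {2} := by
    rw [show ({2} : Set (Fin 3)) = {0, 1}ᶜ by ext i; fin_cases i <;> simp]
    exact isCompl_compl
  simpa [Set.image_pair, Set.image_singleton] using
    e.linearIndependent.isCompl_span_image e.span_eq hcompl

structure IsHeisenbergBasis {L : Type*} [LieRing L] [LieAlgebra ℝ L] (e : Basis (Fin 3) ℝ L) :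
    Prop where
  lie_e0_e1 : ⁅e 0, e 1⁆ = e 2
  lie_e0_e2 : ⁅e 0, e 2⁆ = 0
  lie_e1_e2 : ⁅e 1, e 2⁆ = 0

namespace IsHeisenbergBasis

variable {L : Type*} [LieRing L] [LieAlgebra ℝ L] {e : Basis (Fin 3) ℝ L}

theorem lie_e1_e0 (he : IsHeisenbergBasis e) : ⁅e 1, e 0⁆ = -e 2 := by
  rw [← lie_skew, he.lie_e0_e1]

theorem lie_e2_e0 (he : IsHeisenbergBasis e) : ⁅e 2, e 0⁆ = 0 := by
  rw [← lie_skew, he.lie_e0_e2, neg_zero]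

theorem lie_e2_e1 (he : IsHeisenbergBasis e) : ⁅e 2, e 1⁆ = 0 := by
  rw [← lie_skew, he.lie_e1_e2, neg_zero]

theorem lie_eq (he : IsHeisenbergBasis e) (x y : L) :
    ⁅x, y⁆ = (e.repr x 0 * e.repr y 1 - e.repr x 1 * e.repr y 0) • e 2 := by
  conv_lhs => rw [← e.sum_repr x, ← e.sum_repr y]
  simp only [Fin.sum_univ_three, add_lie, lie_add, smul_lie, lie_smul, lie_self, he.lie_e0_e1,
    he.lie_e0_e2, he.lie_e1_e2, he.lie_e1_e0, he.lie_e2_e0, he.lie_e2_e1, smul_zero, add_zero,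
    zero_add, smul_neg]
  module

theorem lie_mem (he : IsHeisenbergBasis e) (x y : L) : ⁅x, y⁆ ∈ ℝ ∙ e 2 :=
  Submodule.mem_span_singleton.mpr ⟨_, (he.lie_eq x y).symm⟩

theorem lie_eq_zero_of_mem (he : IsHeisenbergBasis e) (x : L) {c : L} (hc : c ∈ ℝ ∙ e 2) :
    ⁅x, c⁆ = 0 := by
  obtain ⟨t, rfl⟩ := Submodule.mem_span_singleton.mp hc
  simp [he.lie_eq x, Basis.repr_self]

theorem mapsTo_of_isLieDeriv (he : IsHeisenbergBasis e) {D : Module.End ℝ L}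
    (hD : IsLieDeriv D) : ∀ x ∈ ℝ ∙ e 2, D x ∈ ℝ ∙ e 2 := by
  intro x hx
  obtain ⟨t, rfl⟩ := Submodule.mem_span_singleton.mp hx
  have h2 : D (e 2) = D ⁅e 0, e 1⁆ := by rw [he.lie_e0_e1]
  rw [map_smul, h2, hD]
  exact Submodule.smul_mem _ _ (add_mem (he.lie_mem _ _) (he.lie_mem _ _))

theorem mapsTo_of_lieHom (he : IsHeisenbergBasis e) (φ : L →ₗ⁅ℝ⁆ L) :
    ∀ x ∈ ℝ ∙ e 2, φ x ∈ ℝ ∙ e 2 := by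
  intro x hx
  obtain ⟨t, rfl⟩ := Submodule.mem_span_singleton.mp hx
  have h2 : φ (e 2) = φ ⁅e 0, e 1⁆ := by rw [he.lie_e0_e1]
  rw [map_smul, h2, φ.map_lie]
  exact Submodule.smul_mem _ _ (he.lie_mem _ _)

theorem map_lie_of_map_e2 (he : IsHeisenbergBasis e) {φ : L →ₗ[ℝ] L}
    (hφ : φ (e 2) = ⁅φ (e 0), φ (e 1)⁆) (x y : L) : φ ⁅x, y⁆ = ⁅φ x, φ y⁆ := by
  let lie : L →ₗ[ℝ] L →ₗ[ℝ] L := LieModule.toEnd ℝ L L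
  suffices lie.compr₂ φ = lie.compl₁₂ φ φ from LinearMap.congr_fun₂ this x y
  refine LinearMap.ext_basis e e fun i j => ?_
  have hφ' : ⁅φ (e 1), φ (e 0)⁆ = -φ (e 2) := by rw [← lie_skew, hφ]
  have hright : ∀ x : L, ⁅x, φ (e 2)⁆ = 0 := fun x =>
    he.lie_eq_zero_of_mem x (hφ ▸ he.lie_mem _ _)
  have hleft : ∀ y : L, ⁅φ (e 2), y⁆ = 0 := fun y => by rw [← lie_skew, hright, neg_zero]
  fin_cases i <;> fin_cases j <;>
    simp [lie, he.lie_e0_e1, he.lie_e0_e2, he.lie_e1_e2, he.lie_e1_e0, he.lie_e2_e0,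
      he.lie_e2_e1, hφ.symm, hφ', hright, hleft]

theorem map_isLieDeriv_eq (he : IsHeisenbergBasis e) (φ : L →ₗ⁅ℝ⁆ L) {D₁ D₂ : Module.End ℝ L}
    (hD₁ : IsLieDeriv D₁) (hD₂ : IsLieDeriv D₂) {lam : ℝ}
    (h : ∀ v ∈ Submodule.span ℝ {e 0, e 1}, φ (D₁ v) = lam • D₂ (φ v)) (x : L) :
    φ (D₁ x) = lam • D₂ (φ x) := by
  have h0 := h (e 0) (Submodule.subset_span (by simp))
  have h1 := h (e 1) (Submodule.subset_span (by simp))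
  suffices (φ : L →ₗ[ℝ] L) ∘ₗ D₁ = lam • (D₂ ∘ₗ (φ : L →ₗ[ℝ] L)) from
    LinearMap.congr_fun this x
  refine e.ext fun i => ?_
  fin_cases i
  · exact h0
  · exact h1
  · simpa [he.lie_e0_e1] using map_isLieDeriv_lie φ hD₁ hD₂ h0 h1

theorem exists_lieEquiv_extension [Module.Finite ℝ L] (he : IsHeisenbergBasis e)
    (g : Submodule.span ℝ {e 0, e 1} ≃ₗ[ℝ] Submodule.span ℝ {e 0, e 1}) :
    ∃ φ : L ≃ₗ⁅ℝ⁆ L, ∀ v : Submodule.span ℝ {e 0, e 1}, φ v = g v := by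
  let m := Submodule.span ℝ {e 0, e 1}
  have hmz := e.isCompl_span_pair_span_singleton
  let e₀ : m := ⟨e 0, Submodule.subset_span (by simp)⟩
  let e₁ : m := ⟨e 1, Submodule.subset_span (by simp)⟩
  obtain ⟨c, hc⟩ := Submodule.mem_span_singleton.mp (he.lie_mem (g e₀) (g e₁))
  let φ : L →ₗ[ℝ] L := LinearMap.ofIsCompl hmz (m.subtype ∘ₗ g.toLinearMap) (c • (ℝ ∙ e 2).subtype)
  have hφm : ∀ v : m, φ v = g v := LinearMap.ofIsCompl_apply_left hmz
  have hφ2 : φ (e 2) = c • e 2 :=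
    LinearMap.ofIsCompl_apply_right hmz ⟨e 2, Submodule.mem_span_singleton_self _⟩
  have hlie := he.map_lie_of_map_e2 (φ := φ) (by rw [hφ2, hc, ← hφm, ← hφm])
  have hsurj : Function.Surjective φ := by
    have hm : m ≤ LinearMap.range φ := fun v hv =>
      ⟨g.symm ⟨v, hv⟩, by rw [hφm, LinearEquiv.apply_symm_apply]⟩
    have hz : ℝ ∙ e 2 ≤ LinearMap.range φ := by
      rw [Submodule.span_singleton_le_iff_mem, ← he.lie_e0_e1]
      obtain ⟨a, ha⟩ := hm e₀.2
      obtain ⟨b, hb⟩ := hm e₁.2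
      exact ⟨⁅a, b⁆, by rw [hlie, ha, hb]⟩
    rw [← LinearMap.range_eq_top, eq_top_iff, ← hmz.sup_eq_top]
    exact sup_le hm hz
  refine ⟨LieEquiv.ofBijective { φ with map_lie' := hlie _ _ }
    ⟨LinearMap.injective_iff_surjective.mpr hsurj, hsurj⟩, hφm⟩

end IsHeisenbergBasis

theorem stmt8_general {L : Type*} [LieRing L] [LieAlgebra ℝ L] [Module.Finite ℝ L]
    (e : Basis (Fin 3) ℝ L)
    (h12 : ⁅e 0, e 1⁆ = e 2) (h13 : ⁅e 0, e 2⁆ = 0) (h23 : ⁅e 1, e 2⁆ = 0)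
    (m : Submodule ℝ L) (hm : m = Submodule.span ℝ {e 0, e 1})
    (D₁ D₂ : Module.End ℝ L) (hd₁ : IsLieDeriv D₁) (hd₂ : IsLieDeriv D₂)
    (hp₁ : PosSpec D₁)
    (hm₁ : ∀ x ∈ m, D₁ x ∈ m) (hm₂ : ∀ x ∈ m, D₂ x ∈ m) :
    ExpIso D₁ D₂ ↔
      ∃ (gm : m ≃ₗ[ℝ] m) (lam : ℝ), lam ≠ 0 ∧
        ∀ v : m, (LinearMap.restrict D₁ hm₁) v
          = lam • gm.symm ((LinearMap.restrict D₂ hm₂) (gm v)) := by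
  have he : IsHeisenbergBasis e := ⟨h12, h13, h23⟩
  subst hm
  constructor
  · intro hiso
    obtain ⟨φ, w, μ, hφ, hμ, hD⟩ := exists_lieHom_of_expIso (surjective_of_posSpec hp₁) hiso
    obtain ⟨g, hg⟩ := exists_linearEquiv_conj_restrict e.isCompl_span_pair_span_singleton
      he.lie_mem hm₁ hm₂ (he.mapsTo_of_isLieDeriv hd₂)
      (LinearMap.map_mem_iff_of_injective hφ (he.mapsTo_of_lieHom φ)) hD
    exact ⟨g, μ, hμ, fun v => by rw [← map_smul, ← hg, g.symm_apply_apply]⟩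
  · rintro ⟨g, lam, hlam, hg⟩
    obtain ⟨φ, hφ⟩ := he.exists_lieEquiv_extension g
    refine expIso_of_lieEquiv φ hlam (he.map_isLieDeriv_eq φ.toLieHom hd₁ hd₂ fun v hv => ?_)
    calc φ (D₁ v) = g (D₁.restrict hm₁ ⟨v, hv⟩) := hφ ⟨_, hm₁ v hv⟩
      _ = lam • D₂ (φ v) := by
        rw [hg, map_smul, g.apply_symm_apply, hφ ⟨v, hv⟩]
        rfl

theorem stmt8 {L : Type*} [LieRing L] [LieAlgebra ℝ L] [Module.Finite ℝ L]
    (e : Basis (Fin 3) ℝ L)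
    (h12 : ⁅e 0, e 1⁆ = e 2) (h13 : ⁅e 0, e 2⁆ = 0) (h23 : ⁅e 1, e 2⁆ = 0)
    (m : Submodule ℝ L) (hm : m = Submodule.span ℝ {e 0, e 1})
    (D₁ D₂ : Module.End ℝ L) (hd₁ : IsLieDeriv D₁) (hd₂ : IsLieDeriv D₂)
    (hp₁ : PosSpec D₁) (hp₂ : PosSpec D₂)
    (hm₁ : ∀ x ∈ m, D₁ x ∈ m) (hm₂ : ∀ x ∈ m, D₂ x ∈ m) :
    ExpIso D₁ D₂ ↔
      ∃ (gm : m ≃ₗ[ℝ] m) (lam : ℝ), lam ≠ 0 ∧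
        ∀ v : m, (LinearMap.restrict D₁ hm₁) v
          = lam • gm.symm ((LinearMap.restrict D₂ hm₂) (gm v)) :=
  stmt8_general e h12 h13 h23 m hm D₁ D₂ hd₁ hd₂ hp₁ hm₁ hm₂
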